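/- Let ω ∈ ℂ satisfy ω³ = 1 and ω ≠ 1. For u ∈ ℂ define the 2×2 complex matrix A(u) = (1/√6)·[[1−u, 1−ωu], [√2, √2·ω²]] and the 1×2 complex matrix B(u) = (1/√6)·[1+u, 1+ωu]. Then for every u ∈ ℂ with ω + u ≠ 0, B(u) = φ(u)·A(u), where φ(u) is the 1×2 complex matrix [(ω−u)/(ω+u), −√2·ω²·u/(ω+u)]. -/

import Mathlib

open Matrix

/-- The 2×2 matrix-valued function `A` from the example. -/
noncomputable def exA (ω u : ℂ) : Matrix (Fin 2) (Fin 2) ℂ :=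
  ((Real.sqrt 6 : ℂ))⁻¹ •
    !![1 - u, 1 - ω * u; (Real.sqrt 2 : ℂ), (Real.sqrt 2 : ℂ) * ω ^ 2]

/-- The 1×2 matrix-valued function `B` from the example. -/
noncomputable def exB (ω u : ℂ) : Matrix (Fin 1) (Fin 2) ℂ :=
  ((Real.sqrt 6 : ℂ))⁻¹ • !![1 + u, 1 + ω * u]

/-- The 1×2 matrix-valued function `φ = B A⁻¹` from the example. -/
noncomputable def exφ (ω u : ℂ) : Matrix (Fin 1) (Fin 2) ℂ :=
  !![(ω - u) / (ω + u), -(Real.sqrt 2 : ℂ) * ω ^ 2 * u / (ω + u)]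

/-! Clearing the denominator `ω + u` turns the claim into the polynomial identity
`[ω - u, -√2 ω² u] · √6 A(u) = (ω + u) · √6 B(u)`, which holds entrywise modulo
`ω² + ω + 1 = 0` and `√2² = 2`. -/

theorem sq_add_self_add_one_eq_zero_of_pow_three_eq_one {R : Type*} [CommRing R] [NoZeroDivisors R]
    {ω : R} (hω3 : ω ^ 3 = 1) (hω1 : ω ≠ 1) : ω ^ 2 + ω + 1 = 0 := by
  have h : (ω - 1) * (ω ^ 2 + ω + 1) = 0 := by linear_combination hω3
  exact (mul_eq_zero.mp h).resolve_left (sub_ne_zero.mpr hω1)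

theorem row_mul_eq_smul_row {R : Type*} [CommRing R] {ω s : R} (hω : ω ^ 2 + ω + 1 = 0)
    (hs : s ^ 2 = 2) (u : R) :
    !![ω - u, -s * ω ^ 2 * u] * !![1 - u, 1 - ω * u; s, s * ω ^ 2] =
      (ω + u) • !![1 + u, 1 + ω * u] := by
  ext i j
  fin_cases i; fin_cases j <;>
    simp only [Matrix.mul_apply, Fin.sum_univ_two, of_apply, cons_val', cons_val_fin_one,
      cons_val_zero, cons_val_one, Fin.zero_eta, Fin.mk_one, Fin.isValue, Matrix.smul_apply,
      smul_eq_mul]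
  · linear_combination (-2 * u) * hω - ω ^ 2 * u * hs
  · linear_combination (-2 * u - 2 * u * ω ^ 2 + 2 * u * ω) * hω - ω ^ 4 * u * hs

theorem stmt11 (ω : ℂ) (hω3 : ω ^ 3 = 1) (hω1 : ω ≠ 1) :
    ∀ u : ℂ, ω + u ≠ 0 → exB ω u = exφ ω u * exA ω u := by
  intro u hu
  have hω := sq_add_self_add_one_eq_zero_of_pow_three_eq_one hω3 hω1
  have hs : (Real.sqrt 2 : ℂ) ^ 2 = 2 := by
    rw [← Complex.ofReal_pow, Real.sq_sqrt zero_le_two, Complex.ofReal_ofNat]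
  have hφ : exφ ω u = (ω + u)⁻¹ • !![ω - u, -(Real.sqrt 2 : ℂ) * ω ^ 2 * u] := by
    ext i j; fin_cases i; fin_cases j <;> simp [exφ, div_eq_inv_mul]
  rw [hφ, exA, exB, Matrix.mul_smul, Matrix.smul_mul, row_mul_eq_smul_row hω hs, smul_smul,
    smul_smul, mul_assoc, inv_mul_cancel₀ hu, mul_one]
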